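/- arXiv:2403.01141 — 3 statements merged into one kernel-verified Lean document; each statement's English description precedes it below -/
import Mathlib

section
/- In dimension d = 1: let v : ℝ → ℝ be 1-periodic semiconcave, S satisfying Hypotheses 1–3 (continuous, coercive, diagonal-periodic, locally semiconcave, ferromagnetic, and the non-crossing condition), and u = T⁻[v]. Then for every x ∈ ℝ the set Σ₊[u](x) = argmax_y {u(y) − S(x,y)} is a singleton. -/
/-!
Let `u = T⁻[v]` and `f = u - S(x, ·)`, so that `f ≤ v(x)`. If `w` is an interior local minimum
of `f` and `z` minimizes `v + S(·, w)`, then `u ≤ v(z) + S(z, ·)` with equality at `w`, so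
`S(z, ·) - S(x, ·)` has a local minimum at `w`; injectivity of `∂₂S(·, w)` forces `z = x`, and
then `f(w) = v(x)`. Hence if `a < b` both maximize `f`, then `f` is constant on `[a, b]` and `x`
minimizes `v + S(·, w)` for every `w ∈ (a, b)`. This contradicts the injectivity of `Σ₋[v]`:
at a common minimizer `x` of `v + S(·, w₁)` and `v + S(·, w₂)`, semiconcavity of `v` forces
`∂₁S(x, w₁) = ∂₁S(x, w₂)`, and `∂₁S(x, ·)` is injective. A maximizer exists by compactness, since
periodicity bounds `u` above and `S` is coercive.
-/

open Filter Topology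

/-- The discrete backward Lax-Oleinik operator (dimension 1). -/
noncomputable def Tminus (S : ℝ → ℝ → ℝ) (u : ℝ → ℝ) : ℝ → ℝ :=
  fun y => ⨅ x, (u x + S x y)

/-- The discrete forward Lax-Oleinik operator (dimension 1). -/
noncomputable def Tplus (S : ℝ → ℝ → ℝ) (u : ℝ → ℝ) : ℝ → ℝ :=
  fun x => ⨆ y, (u y - S x y)

/-- 1-periodicity. -/
def Periodic1 (u : ℝ → ℝ) : Prop := ∀ x, u (x + 1) = u x

/-- Coercivity: S(x,y) → +∞ as |x−y| → ∞. -/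
def Coercive1 (S : ℝ → ℝ → ℝ) : Prop :=
  ∀ M : ℝ, ∃ R : ℝ, ∀ x y : ℝ, R ≤ |x - y| → M ≤ S x y

/-- Diagonal periodicity: S(x+m, y+m) = S(x,y) for m ∈ ℤ. -/
def DiagPeriodic1 (S : ℝ → ℝ → ℝ) : Prop :=
  ∀ (m : ℤ) (x y : ℝ), S (x + m) (y + m) = S x y

/-- Semiconcavity with a linear modulus (dimension 1). -/
def Semiconcave1 (v : ℝ → ℝ) : Prop :=
  ∃ C : ℝ, 0 ≤ C ∧ ∀ x y θ : ℝ, θ ∈ Set.Icc (0:ℝ) 1 →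
    θ * v x + (1 - θ) * v y - v (θ * x + (1 - θ) * y) ≤
      C / 2 * θ * (1 - θ) * |x - y| ^ 2

/-- Local semiconcavity (with linear modulus) on a normed space. -/
def LocallySemiconcave {E : Type*} [NormedAddCommGroup E] [NormedSpace ℝ E]
    (f : E → ℝ) : Prop :=
  ∀ x : E, ∃ U ∈ 𝓝 x, Convex ℝ U ∧ ∃ C : ℝ, 0 ≤ C ∧
    ∀ y ∈ U, ∀ z ∈ U, ∀ θ : ℝ, θ ∈ Set.Icc (0:ℝ) 1 →
      θ * f y + (1 - θ) * f z - f (θ • y + (1 - θ) • z) ≤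
        C / 2 * θ * (1 - θ) * ‖y - z‖ ^ 2

/-- The ferromagnetic property in dimension 1: S is C¹ and the maps
`y ↦ ∂₁S(x,y)` and `x ↦ ∂₂S(x,y)` are homeomorphisms of ℝ. -/
def Ferromagnetic1 (S : ℝ → ℝ → ℝ) : Prop :=
  ContDiff ℝ 1 (fun p : ℝ × ℝ => S p.1 p.2) ∧
  (∀ x : ℝ, ∃ h : ℝ ≃ₜ ℝ, ∀ y, h y = deriv (fun t => S t y) x) ∧
  (∀ y : ℝ, ∃ h : ℝ ≃ₜ ℝ, ∀ x, h x = deriv (fun t => S x t) y)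

/-- The Aubry–Le Daeron non-crossing condition. -/
def NonCrossing (S : ℝ → ℝ → ℝ) : Prop :=
  ∀ x₁ x₂ y₁ y₂ : ℝ, (x₁ - x₂) * (y₁ - y₂) < 0 →
    S x₁ y₂ + S x₂ y₁ < S x₁ y₁ + S x₂ y₂

open Set

theorem Semiconcave1.continuous {v : ℝ → ℝ} (hv : Semiconcave1 v) : Continuous v := by
  obtain ⟨C, -, hC⟩ := hv
  have hconc : ConcaveOn ℝ univ (fun t => v t - C / 2 * t ^ 2) := by
    refine ⟨convex_univ, fun p _ q _ a b ha hb hab => ?_⟩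
    obtain rfl : b = 1 - a := by linarith
    have h := hC p q a ⟨ha, by linarith⟩
    rw [sq_abs] at h
    simp only [smul_eq_mul]
    nlinarith [h]
  have hcont : Continuous fun t => v t - C / 2 * t ^ 2 :=
    continuousOn_univ.mp (hconc.continuousOn isOpen_univ)
  exact (hcont.add (by fun_prop : Continuous fun t : ℝ => C / 2 * t ^ 2)).congr fun t =>
    sub_add_cancel _ _

theorem Semiconcave1.eq_of_hasDerivAt_of_forall_le {v φ ψ : ℝ → ℝ} {z a b : ℝ}
    (hv : Semiconcave1 v) (hφ : HasDerivAt φ a z) (hψ : HasDerivAt ψ b z)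
    (hφz : ∀ t, v z + φ z ≤ v t + φ t) (hψz : ∀ t, v z + ψ z ≤ v t + ψ t) : a = b := by
  obtain ⟨C, -, hC⟩ := hv
  -- `g h ≤ v (z + h) + v (z - h) - 2 v z - C h² ≤ 0 = g 0`
  set g : ℝ → ℝ := fun h => φ z - φ (z + h) + (ψ z - ψ (z - h)) - C * h ^ 2
  have hmax : IsLocalMax g 0 := Eventually.of_forall fun h => by
    have hmid := hC (z + h) (z - h) (1 / 2) ⟨by norm_num, by norm_num⟩
    rw [show 1 / 2 * (z + h) + (1 - 1 / 2) * (z - h) = z by ring, sq_abs] at hmid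
    simp only [g, add_zero, sub_zero, sub_self]
    nlinarith [hφz (z + h), hψz (z - h)]
  have hφ' : HasDerivAt (fun h => φ (z + h)) a 0 := .comp_const_add z 0 (by simpa using hφ)
  have hψ' : HasDerivAt (fun h => ψ (z - h)) (-b) 0 := .comp_const_sub z 0 (by simpa using hψ)
  have hsq : HasDerivAt (fun h : ℝ => C * h ^ 2) 0 0 := by
    simpa using (hasDerivAt_pow 2 (0 : ℝ)).const_mul C
  have hg : HasDerivAt g (0 - a + (0 - -b) - 0) 0 :=
    (((hasDerivAt_const _ _).sub hφ').add ((hasDerivAt_const _ _).sub hψ')).sub hsq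
  have := hmax.hasDerivAt_eq_zero hg
  linarith

namespace Ferromagnetic1

variable {S : ℝ → ℝ → ℝ}

theorem hasDerivAt_fst (hS : Ferromagnetic1 S) (x y : ℝ) :
    HasDerivAt (fun t => S t y) (deriv (fun t => S t y) x) x :=
  DifferentiableAt.hasDerivAt <| (hS.1.differentiable one_ne_zero (x, y)).comp (f := (·, y)) x
    (differentiableAt_id.prodMk (differentiableAt_const y))

theorem hasDerivAt_snd (hS : Ferromagnetic1 S) (x y : ℝ) :
    HasDerivAt (fun t => S x t) (deriv (fun t => S x t) y) y :=
  DifferentiableAt.hasDerivAt <| (hS.1.differentiable one_ne_zero (x, y)).comp (f := (x, ·)) y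
    ((differentiableAt_const x).prodMk differentiableAt_id)

theorem injective_deriv_fst (hS : Ferromagnetic1 S) (x : ℝ) :
    Function.Injective fun y => deriv (fun t => S t y) x := by
  obtain ⟨h, hh⟩ := hS.2.1 x
  exact fun y₁ y₂ hy => h.injective (by simpa only [hh] using hy)

theorem injective_deriv_snd (hS : Ferromagnetic1 S) (y : ℝ) :
    Function.Injective fun x => deriv (fun t => S x t) y := by
  obtain ⟨h, hh⟩ := hS.2.2 y
  exact fun x₁ x₂ hx => h.injective (by simpa only [hh] using hx)

end Ferromagnetic1

theorem eqOn_Icc_of_forall_isLocalMin {f : ℝ → ℝ} {a b : ℝ} (hab : a ≤ b)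
    (hf : ContinuousOn f (Icc a b)) (hb : f b = f a) (hle : ∀ t ∈ Icc a b, f t ≤ f a)
    (hloc : ∀ w ∈ Ioo a b, IsLocalMin f w → f a ≤ f w) : ∀ t ∈ Icc a b, f t = f a := by
  obtain ⟨w, hw, hwmin⟩ := isCompact_Icc.exists_isMinOn (nonempty_Icc.mpr hab) hf
  have hfw : f a ≤ f w := by
    rcases eq_endpoints_or_mem_Ioo_of_mem_Icc hw with rfl | rfl | hw'
    · exact le_rfl
    · exact hb.ge
    · exact hloc w hw' (hwmin.isLocalMin (Icc_mem_nhds hw'.1 hw'.2))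
  exact fun t ht => le_antisymm (hle t ht) (hfw.trans (hwmin ht))

/-- The set `Σ₋[v](y) = argmin_x {v(x) + S(x, y)}` of the paper. -/
def backwardMinimizers (S : ℝ → ℝ → ℝ) (v : ℝ → ℝ) (y : ℝ) : Set ℝ :=
  {z | ∀ t, v z + S z y ≤ v t + S t y}

section LaxOleinik

variable {S : ℝ → ℝ → ℝ} {v : ℝ → ℝ}

theorem Ferromagnetic1.eq_of_mem_backwardMinimizers (hS : Ferromagnetic1 S)
    (hv : Semiconcave1 v) {z p q : ℝ} (hp : z ∈ backwardMinimizers S v p)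
    (hq : z ∈ backwardMinimizers S v q) : p = q :=
  hS.injective_deriv_fst z <|
    hv.eq_of_hasDerivAt_of_forall_le (hS.hasDerivAt_fst z p) (hS.hasDerivAt_fst z q) hp hq

theorem Tminus_eq_of_mem_backwardMinimizers {y z : ℝ} (hz : z ∈ backwardMinimizers S v y) :
    Tminus S v y = v z + S z y :=
  le_antisymm (ciInf_le ⟨v z + S z y, by rintro _ ⟨t, rfl⟩; exact hz t⟩ z) (le_ciInf hz)

theorem Tminus_le {y : ℝ} (hy : (backwardMinimizers S v y).Nonempty) (t : ℝ) :
    Tminus S v y ≤ v t + S t y := by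
  obtain ⟨z, hz⟩ := hy
  rw [Tminus_eq_of_mem_backwardMinimizers hz]
  exact hz t

theorem exists_dist_lt_forall_le_of_forall_dist_le {g : ℝ → ℝ} (hg : Continuous g) {y R : ℝ}
    (h : ∀ t, R ≤ dist t y → g y < g t) : ∃ z, dist z y < R ∧ ∀ t, g z ≤ g t := by
  obtain ⟨z, hz⟩ := hg.exists_forall_le' y <| by
    filter_upwards [(isCompact_closedBall y R).compl_mem_cocompact] with t ht
    exact (h t (not_le.mp (show ¬dist t y ≤ R from ht)).le).le
  exact ⟨z, not_le.mp fun hzR => (h z hzR).not_ge (hz y), hz⟩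

theorem bddAbove_range_add_diag (hS : Continuous fun p : ℝ × ℝ => S p.1 p.2)
    (hdp : DiagPeriodic1 S) (hvp : Periodic1 v) (hvc : Continuous v) :
    BddAbove (range fun t => v t + S t t) := by
  have hdiag : Function.Periodic (fun t => S t t) 1 := fun t => by simpa using hdp 1 t t
  exact (Function.Periodic.add hvp hdiag).compact_of_continuous one_ne_zero
    (hvc.add (hS.comp (continuous_id.prodMk continuous_id))) |>.bddAbove

theorem exists_mem_backwardMinimizers_dist_lt (hS : Continuous fun p : ℝ × ℝ => S p.1 p.2)
    (hco : Coercive1 S) (hdp : DiagPeriodic1 S) (hvp : Periodic1 v) (hvc : Continuous v) :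
    ∃ R, ∀ y, ∃ z ∈ backwardMinimizers S v y, dist z y < R := by
  obtain ⟨A, hA⟩ := (Function.Periodic.compact_of_continuous hvp one_ne_zero hvc).bddBelow
  obtain ⟨B, hB⟩ := bddAbove_range_add_diag hS hdp hvp hvc
  obtain ⟨R, hR⟩ := hco (B - A + 1)
  refine ⟨R, fun y => ?_⟩
  obtain ⟨z, hzy, hz⟩ := exists_dist_lt_forall_le_of_forall_dist_le (g := fun t => v t + S t y)
    (hvc.add (hS.comp (continuous_id.prodMk continuous_const))) fun t ht => by
      have := hR t y (by rwa [← Real.dist_eq])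
      linarith [hA (mem_range_self t), hB (mem_range_self y)]
  exact ⟨z, hz, hzy⟩

theorem continuous_Tminus (hS : Continuous fun p : ℝ × ℝ => S p.1 p.2) (hvc : Continuous v)
    {R : ℝ} (hR : ∀ y, ∃ z ∈ backwardMinimizers S v y, dist z y < R) :
    Continuous (Tminus S v) := by
  -- minimizers stay within `R` of `y`, so `T⁻[v]` is a minimum over the fixed compact `[-R, R]`
  have hinf : Tminus S v = fun y =>
      sInf ((fun y h => v (y + h) + S (y + h) y) y '' Metric.closedBall 0 R) := by
    funext y
    obtain ⟨z, hz, hzy⟩ := hR y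
    rw [Tminus_eq_of_mem_backwardMinimizers hz]
    symm
    refine IsLeast.csInf_eq ⟨⟨z - y, ?_, by simp⟩, ?_⟩
    · rw [mem_closedBall_zero_iff, Real.norm_eq_abs, ← Real.dist_eq]
      exact hzy.le
    · rintro _ ⟨h, -, rfl⟩
      exact hz (y + h)
  rw [hinf]
  exact (isCompact_closedBall 0 R).continuous_sInf <|
    (hvc.comp (continuous_fst.add continuous_snd)).add
      (hS.comp ((continuous_fst.add continuous_snd).prodMk continuous_fst))

theorem exists_forall_Tminus_sub_le (hS : Continuous fun p : ℝ × ℝ => S p.1 p.2)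
    (hco : Coercive1 S) (hdp : DiagPeriodic1 S) (hvp : Periodic1 v) (hvc : Continuous v)
    (hmin : ∀ y, (backwardMinimizers S v y).Nonempty) (hu : Continuous (Tminus S v)) (x : ℝ) :
    ∃ y, ∀ z, Tminus S v z - S x z ≤ Tminus S v y - S x y := by
  obtain ⟨B, hB⟩ := bddAbove_range_add_diag hS hdp hvp hvc
  obtain ⟨R, hR⟩ := hco (B - (Tminus S v x - S x x))
  refine Continuous.exists_forall_ge' (f := fun t => Tminus S v t - S x t)
    (hu.sub (hS.comp (continuous_const.prodMk continuous_id))) x ?_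
  filter_upwards [(isCompact_closedBall x R).compl_mem_cocompact] with t ht
  have hfar := hR x t <| by
    rw [abs_sub_comm, ← Real.dist_eq]
    exact (not_le.mp (show ¬dist t x ≤ R from ht)).le
  linarith [Tminus_le (hmin t) t, hB (mem_range_self t)]

theorem mem_backwardMinimizers_of_isLocalMin (hS : Ferromagnetic1 S)
    (hmin : ∀ y, (backwardMinimizers S v y).Nonempty) {x w : ℝ}
    (hw : IsLocalMin (fun t => Tminus S v t - S x t) w) : x ∈ backwardMinimizers S v w := by
  obtain ⟨z, hz⟩ := hmin w
  have hloc : IsLocalMin (fun t => S z t - S x t) w := by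
    filter_upwards [hw] with t ht
    have := Tminus_eq_of_mem_backwardMinimizers hz
    linarith [Tminus_le (hmin t) z]
  have hderiv := hloc.hasDerivAt_eq_zero ((hS.hasDerivAt_snd z w).sub (hS.hasDerivAt_snd x w))
  obtain rfl : z = x := hS.injective_deriv_snd w (sub_eq_zero.mp hderiv)
  exact hz

theorem eq_of_forall_Tminus_sub_le (hS : Ferromagnetic1 S) (hv : Semiconcave1 v)
    (hmin : ∀ y, (backwardMinimizers S v y).Nonempty) (hu : Continuous (Tminus S v)) {x a b : ℝ}
    (ha : ∀ z, Tminus S v z - S x z ≤ Tminus S v a - S x a)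
    (hb : ∀ z, Tminus S v z - S x z ≤ Tminus S v b - S x b) : a = b := by
  wlog hab : a < b generalizing a b
  · rcases (not_lt.mp hab).lt_or_eq with hba | hba
    exacts [(this hb ha hba).symm, hba.symm]
  set f := fun t => Tminus S v t - S x t
  have hconst : ∀ t ∈ Icc a b, f t = f a :=
    eqOn_Icc_of_forall_isLocalMin hab.le (hu.sub (hS.1.continuous.comp
      (continuous_const.prodMk continuous_id))).continuousOn (le_antisymm (ha b) (hb a))
      (fun t _ => ha t) fun w _ hw => by
        have hx := mem_backwardMinimizers_of_isLocalMin hS hmin hw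
        have := Tminus_eq_of_mem_backwardMinimizers hx
        linarith [Tminus_le (hmin a) x]
  have hlocal : ∀ w ∈ Ioo a b, x ∈ backwardMinimizers S v w := fun w hw =>
    mem_backwardMinimizers_of_isLocalMin hS hmin <|
      eventually_of_mem (Ioo_mem_nhds hw.1 hw.2) fun t ht =>
        (hconst w (Ioo_subset_Icc_self hw)).trans (hconst t (Ioo_subset_Icc_self ht)).symm |>.le
  obtain ⟨c, hac, hcb⟩ := exists_between hab
  obtain ⟨d, hcd, hdb⟩ := exists_between hcb
  exact absurd (hS.eq_of_mem_backwardMinimizers hv (hlocal c ⟨hac, hcb⟩)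
    (hlocal d ⟨hac.trans hcd, hdb⟩)) hcd.ne

end LaxOleinik

theorem optimal_forward_map_singleton_general (S : ℝ → ℝ → ℝ)
    (hco : Coercive1 S) (hdp : DiagPeriodic1 S)
    (hfer : Ferromagnetic1 S)
    (v u : ℝ → ℝ) (hvp : Periodic1 v) (hv : Semiconcave1 v)
    (hu : u = Tminus S v) :
    ∀ x : ℝ, ∃! y : ℝ, ∀ z, u z - S x z ≤ u y - S x y := by
  subst hu
  have hS : Continuous fun p : ℝ × ℝ => S p.1 p.2 := hfer.1.continuous
  obtain ⟨R, hR⟩ := exists_mem_backwardMinimizers_dist_lt hS hco hdp hvp hv.continuous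
  have hmin : ∀ y, (backwardMinimizers S v y).Nonempty := fun y =>
    let ⟨z, hz, _⟩ := hR y; ⟨z, hz⟩
  have hcont : Continuous (Tminus S v) := continuous_Tminus hS hv.continuous hR
  intro x
  obtain ⟨y, hy⟩ := exists_forall_Tminus_sub_le hS hco hdp hvp hv.continuous hmin hcont x
  exact ⟨y, hy, fun y' hy' => eq_of_forall_Tminus_sub_le hfer hv hmin hcont hy' hy⟩

/-- For u = T⁻[v] with v periodic semiconcave, the optimal forward map is single-valued. -/
theorem optimal_forward_map_singleton (S : ℝ → ℝ → ℝ)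
    (hS : Continuous fun p : ℝ × ℝ => S p.1 p.2)
    (hco : Coercive1 S) (hdp : DiagPeriodic1 S)
    (hlsc : LocallySemiconcave fun p : ℝ × ℝ => S p.1 p.2)
    (hfer : Ferromagnetic1 S) (hnc : NonCrossing S)
    (v u : ℝ → ℝ) (hvp : Periodic1 v) (hv : Semiconcave1 v)
    (hu : u = Tminus S v) :
    ∀ x : ℝ, ∃! y : ℝ, ∀ z, u z - S x z ≤ u y - S x y :=
  optimal_forward_map_singleton_general S hco hdp hfer v u hvp hv hu
end

section
/- In dimension 1, under Hypotheses 1–3: let u = T⁻[v] with v 1-periodic semiconcave. Then u is non-differentiable at a point y if and only if the preimage (Σ₊[u])⁻¹(y) is a non-degenerate closed bounded interval. -/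
open Filter Topology

/-!
For `x` in the fibre of `σ` over `y`, the function `u - S x ·` is maximal at `y`, so `S x ·` touches
`u` from above there. If `u` is differentiable at `y`, then `u' y = ∂₂S(x, y)` for every such `x`,
and the ferromagnetic injectivity of `x ↦ ∂₂S(x, y)` makes the fibre a point. Conversely, if the
fibre is the single point `a`, every `z` near `y` is `σ w` for some `w` near `a`, and `u z - u y`
lies between `S w z - S w y` and `S a z - S a y`; strict differentiability of `S` at `(a, y)` makes
both bounds `∂₂S(a, y) (z - y) + o(z - y)`. Fibres of a continuous degree-one lift are compact
intervals, so "not a point" means "a non-degenerate interval".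
-/

open Set Asymptotics

theorem CircleDeg1Lift.exists_preimage_singleton_eq_Icc (f : CircleDeg1Lift) (hf : Continuous f)
    (y : ℝ) : ∃ a b, a ≤ b ∧ f ⁻¹' {y} = Icc a b := by
  obtain ⟨c, hc⟩ := f.continuous_iff_surjective.1 hf y
  have hbdd : f ⁻¹' {y} ⊆ Icc (c - 1) (c + 1) := by
    intro x (hx : f x = y)
    constructor
    · by_contra! h
      have := f.monotone (show x + 1 ≤ c by linarith)
      rw [f.map_add_one] at this
      linarith
    · by_contra! h
      have := f.monotone (show c + 1 ≤ x by linarith)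
      rw [f.map_add_one] at this
      linarith
  have hconn : IsConnected (f ⁻¹' {y}) :=
    ⟨⟨c, hc⟩, (ordConnected_singleton.preimage_mono f.monotone).isPreconnected⟩
  have hcpt : IsCompact (f ⁻¹' {y}) :=
    isCompact_Icc.of_isClosed_subset (isClosed_singleton.preimage hf) hbdd
  exact ⟨_, _, csInf_le_csSup hconn.nonempty hcpt.bddBelow hcpt.bddAbove,
    eq_Icc_of_connected_compact hconn hcpt⟩

theorem Monotone.tendsto_rightInverse_of_preimage_eq_singleton {α β : Type*} [LinearOrder α]
    [TopologicalSpace α] [OrderTopology α] [LinearOrder β] [TopologicalSpace β] [OrderTopology β]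
    {σ : α → β} {g : β → α} (hσ : Monotone σ) (hg : Function.RightInverse g σ) {a : α}
    (ha : σ ⁻¹' {σ a} = {a}) : Tendsto g (𝓝 (σ a)) (𝓝 a) := by
  have hne : ∀ {x}, x ≠ a → σ x ≠ σ a := fun hx hσx =>
    hx (by simpa using ha.subset (mem_preimage.2 hσx))
  refine tendsto_order.2 ⟨fun x hx => ?_, fun x hx => ?_⟩
  · have hlt : σ x < σ a := (hσ hx.le).lt_of_ne (hne hx.ne)
    filter_upwards [lt_mem_nhds hlt] with z hz
    exact lt_of_not_ge fun h => (hg z ▸ hσ h).not_gt hz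
  · have hlt : σ a < σ x := (hσ hx.le).lt_of_ne' (hne hx.ne')
    filter_upwards [gt_mem_nhds hlt] with z hz
    exact lt_of_not_ge fun h => (hg z ▸ hσ h).not_gt hz

theorem Asymptotics.IsLittleO.of_le_of_le {α E : Type*} [Norm E] {l : Filter α}
    {f g h : α → ℝ} {k : α → E} (hf : f =o[l] k) (hh : h =o[l] k)
    (hfg : ∀ᶠ x in l, f x ≤ g x) (hgh : ∀ᶠ x in l, g x ≤ h x) : g =o[l] k := by
  refine IsBigO.trans_isLittleO ?_ (hf.norm_left.add hh.norm_left)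
  refine IsBigO.of_bound 1 ?_
  filter_upwards [hfg, hgh] with x h₁ h₂
  simp only [Real.norm_eq_abs, one_mul]
  rw [abs_of_nonneg (by positivity : 0 ≤ |f x| + |h x|), abs_le]
  constructor <;> cases abs_cases (f x) <;> cases abs_cases (h x) <;> linarith

theorem HasStrictFDerivAt.isLittleO_sub_snd {S : ℝ → ℝ → ℝ} {S' : ℝ × ℝ →L[ℝ] ℝ} {a y : ℝ}
    (hS : HasStrictFDerivAt (fun p : ℝ × ℝ => S p.1 p.2) S' (a, y)) {w : ℝ → ℝ}
    (hw : Tendsto w (𝓝 y) (𝓝 a)) :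
    (fun z => S (w z) z - S (w z) y - (z - y) * S' (0, 1)) =o[𝓝 y] fun z => z - y := by
  have hlim : Tendsto (fun z => ((w z, z), (w z, y))) (𝓝 y) (𝓝 ((a, y), (a, y))) :=
    (hw.prodMk_nhds tendsto_id).prodMk_nhds (hw.prodMk_nhds tendsto_const_nhds)
  have hdiff : ∀ z, (w z, z) - (w z, y) = (z - y) • ((0 : ℝ), (1 : ℝ)) := fun z => by
    ext <;> simp
  refine ((hS.isLittleO.comp_tendsto hlim).congr_left fun z => ?_).trans_isBigO ?_
  · simp only [Function.comp_apply, hdiff, map_smul, smul_eq_mul]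
  · exact isBigO_of_le _ fun z => by simp [hdiff, Prod.norm_def]

theorem hasDerivAt_of_sandwich {S : ℝ → ℝ → ℝ} {S' : ℝ × ℝ →L[ℝ] ℝ} {u g : ℝ → ℝ} {a y : ℝ}
    (hS : HasStrictFDerivAt (fun p : ℝ × ℝ => S p.1 p.2) S' (a, y))
    (hg : Tendsto g (𝓝 y) (𝓝 a))
    (hlower : ∀ z, S (g z) z - S (g z) y ≤ u z - u y)
    (hupper : ∀ z, u z - u y ≤ S a z - S a y) : HasDerivAt u (S' (0, 1)) y := by
  rw [hasDerivAt_iff_isLittleO]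
  refine (hS.isLittleO_sub_snd hg).of_le_of_le (hS.isLittleO_sub_snd tendsto_const_nhds)
    (Eventually.of_forall fun z => ?_) (Eventually.of_forall fun z => ?_)
  · simp only [smul_eq_mul]; linarith [hlower z]
  · simp only [smul_eq_mul]; linarith [hupper z]

theorem IsLocalMax.deriv_eq_deriv_of_sub {f h : ℝ → ℝ} {y : ℝ}
    (hmax : IsLocalMax (fun z => f z - h z) y) (hf : DifferentiableAt ℝ f y)
    (hh : DifferentiableAt ℝ h y) : deriv f y = deriv h y := by
  have := hmax.deriv_eq_zero
  rw [deriv_fun_sub hf hh] at this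
  linarith

theorem nondiff_iff_fiber_interval_general (S : ℝ → ℝ → ℝ) (hfer : Ferromagnetic1 S) (u σ : ℝ → ℝ)
    (hσmax : ∀ x z, u z - S x z ≤ u (σ x) - S x (σ x))
    (hσcont : Continuous σ) (hσmono : Monotone σ)
    (hσdeg : ∀ x, σ (x + 1) = σ x + 1) :
    ∀ y : ℝ, ¬ DifferentiableAt ℝ u y ↔
      ∃ a b : ℝ, a < b ∧ σ ⁻¹' {y} = Set.Icc a b := by
  obtain ⟨hC1, -, hinj⟩ := hfer
  have hSx : ∀ x, Differentiable ℝ (S x) := fun x =>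
    (hC1.differentiable one_ne_zero).comp ((differentiable_const x).prodMk differentiable_id)
  let f : CircleDeg1Lift := ⟨⟨σ, hσmono⟩, hσdeg⟩
  intro y
  constructor
  · intro hnd
    by_contra hnot
    obtain ⟨a, b, hab, hfib⟩ := f.exists_preimage_singleton_eq_Icc hσcont y
    obtain rfl : a = b := hab.eq_of_not_lt fun h => hnot ⟨a, b, h, hfib⟩
    rw [Icc_self] at hfib
    obtain rfl : σ a = y := (hfib.symm.subset rfl : a ∈ σ ⁻¹' {y})
    obtain ⟨g, hg⟩ := (f.continuous_iff_surjective.1 hσcont).hasRightInverse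
    have hlower : ∀ z, S (g z) z - S (g z) (σ a) ≤ u z - u (σ a) := fun z => by
      have := hσmax (g z) (σ a)
      rw [show σ (g z) = z from hg z] at this
      linarith
    have hupper : ∀ z, u z - u (σ a) ≤ S a z - S a (σ a) := fun z => by linarith [hσmax a z]
    exact hnd (hasDerivAt_of_sandwich (hC1.hasStrictFDerivAt one_ne_zero)
      (hσmono.tendsto_rightInverse_of_preimage_eq_singleton hg hfib) hlower hupper).differentiableAt
  · rintro ⟨a, b, hab, hfib⟩ hdiff
    have hslope : ∀ x ∈ σ ⁻¹' {y}, deriv u y = deriv (fun t => S x t) y := by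
      rintro x (rfl : σ x = y)
      exact IsLocalMax.deriv_eq_deriv_of_sub (Eventually.of_forall (hσmax x)) hdiff (hSx x _)
    obtain ⟨h, hh⟩ := hinj y
    refine hab.ne (h.injective ?_)
    rw [hh, hh, ← hslope a (hfib ▸ left_mem_Icc.2 hab.le),
      ← hslope b (hfib ▸ right_mem_Icc.2 hab.le)]

/-- u = T⁻[v] is non-differentiable at y iff the fiber of the optimal forward
map over y is a non-degenerate closed bounded interval. -/
theorem nondiff_iff_fiber_interval (S : ℝ → ℝ → ℝ)
    (hS : Continuous fun p : ℝ × ℝ => S p.1 p.2)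
    (hco : Coercive1 S) (hdp : DiagPeriodic1 S)
    (hlsc : LocallySemiconcave fun p : ℝ × ℝ => S p.1 p.2)
    (hfer : Ferromagnetic1 S) (hnc : NonCrossing S)
    (v u σ : ℝ → ℝ) (hvp : Periodic1 v) (hv : Semiconcave1 v)
    (hu : u = Tminus S v)
    (hσmax : ∀ x z, u z - S x z ≤ u (σ x) - S x (σ x))
    (hσuniq : ∀ x y, (∀ z, u z - S x z ≤ u y - S x y) → y = σ x)
    (hσcont : Continuous σ) (hσmono : Monotone σ)
    (hσdeg : ∀ x, σ (x + 1) = σ x + 1) :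
    ∀ y : ℝ, ¬ DifferentiableAt ℝ u y ↔
      ∃ a b : ℝ, a < b ∧ σ ⁻¹' {y} = Set.Icc a b :=
  nondiff_iff_fiber_interval_general S hfer u σ hσmax hσcont hσmono hσdeg
end

section
/- In dimension 1, under Hypotheses 1–3: let u ∈ T⁻(SC(𝕋)) be a sub-action (u(y)−u(x) ≤ S(x,y) − S̄ for all x,y). If {xₙ}_{n∈ℤ} is a u-calibrated sequence, i.e. u(x_{n+1}) − u(xₙ) = S(xₙ, x_{n+1}) − S̄ for all n, then x_{n+1} = Σ₊[u](xₙ) for every n. Consequently the rotation number ρ(Σ₊[u]) = lim_{n→∞}(xₙ − x₀)/n equals the rotation number of the calibrated sequence. -/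
open Filter Topology

theorem maximizer_of_calibrated {S : ℝ → ℝ → ℝ} {u : ℝ → ℝ} {Sbar a b : ℝ}
    (hsub : ∀ x y, u y - u x ≤ S x y - Sbar) (hcal : u b - u a = S a b - Sbar) :
    ∀ z, u z - S a z ≤ u b - S a b := by
  intro z
  linarith [hsub a z]

theorem iterate_eq_of_succ_eq {α : Type*} {f : α → α} {x : ℤ → α}
    (hx : ∀ n : ℤ, x (n + 1) = f (x n)) (n : ℕ) : f^[n] (x 0) = x n := by
  induction n with
  | zero => rfl
  | succ k ih =>
    rw [Function.iterate_succ_apply', ih, ← hx]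
    push_cast
    rfl

theorem calibrated_is_forward_orbit_general (S : ℝ → ℝ → ℝ)
    (Sbar : ℝ) (u σ : ℝ → ℝ)
    (hsub : ∀ x y, u y - u x ≤ S x y - Sbar)
    (hσuniq : ∀ x y, (∀ z, u z - S x z ≤ u y - S x y) → y = σ x)
    (x : ℤ → ℝ)
    (hcal : ∀ n : ℤ, u (x (n + 1)) - u (x n) = S (x n) (x (n + 1)) - Sbar) :
    (∀ n : ℤ, x (n + 1) = σ (x n)) ∧
    ∀ ρ : ℝ, Tendsto (fun n : ℕ => (σ^[n] (x 0) - x 0) / n) atTop (𝓝 ρ) →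
      Tendsto (fun n : ℕ => (x (n : ℤ) - x 0) / n) atTop (𝓝 ρ) := by
  have horbit : ∀ n : ℤ, x (n + 1) = σ (x n) := fun n =>
    hσuniq _ _ (maximizer_of_calibrated hsub (hcal n))
  refine ⟨horbit, fun ρ hρ => hρ.congr fun n => ?_⟩
  rw [iterate_eq_of_succ_eq horbit]

/-- Calibrated sequences are orbits of the optimal forward map, and hence have
the same rotation number as Σ₊[u]. -/
theorem calibrated_is_forward_orbit (S : ℝ → ℝ → ℝ)
    (hS : Continuous fun p : ℝ × ℝ => S p.1 p.2)
    (hco : Coercive1 S) (hdp : DiagPeriodic1 S)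
    (hlsc : LocallySemiconcave fun p : ℝ × ℝ => S p.1 p.2)
    (hfer : Ferromagnetic1 S) (hnc : NonCrossing S)
    (Sbar : ℝ) (u σ : ℝ → ℝ)
    (huim : ∃ v : ℝ → ℝ, Periodic1 v ∧ Semiconcave1 v ∧ u = Tminus S v)
    (hsub : ∀ x y, u y - u x ≤ S x y - Sbar)
    (hσmax : ∀ x z, u z - S x z ≤ u (σ x) - S x (σ x))
    (hσuniq : ∀ x y, (∀ z, u z - S x z ≤ u y - S x y) → y = σ x)
    (x : ℤ → ℝ)
    (hcal : ∀ n : ℤ, u (x (n + 1)) - u (x n) = S (x n) (x (n + 1)) - Sbar) :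
    (∀ n : ℤ, x (n + 1) = σ (x n)) ∧
    ∀ ρ : ℝ, Tendsto (fun n : ℕ => (σ^[n] (x 0) - x 0) / n) atTop (𝓝 ρ) →
      Tendsto (fun n : ℕ => (x (n : ℤ) - x 0) / n) atTop (𝓝 ρ) :=
  calibrated_is_forward_orbit_general S Sbar u σ hsub hσuniq x hcal
end
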